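/- Let 0<β<1, 0≤μ<1, p>1/β, and x₀>0. Assume hypotheses (1)-(3): φ is nonnegative, continuous and nondecreasing on [0,+∞) with φ(t) ≤ M t^μ for some M≥0 and all t≥0; t↦t^β l(t) is nonnegative, continuous and nonincreasing on (0,+∞) with t↦t^{(1-μ)(1-β)} l(t) in L^p[0,1]; t↦t^β k(t) is nonnegative, continuous and nonincreasing on (0,+∞) with t↦t^{1-β} k(t) in L^p[0,1]. Suppose lim_{t→+∞} t^β l(t) = 0 and lim_{t→+∞} t^β k(t) = 0. Then there exists a nonnegative, strictly decreasing continuous function x on (0,+∞) with t↦t^{1-β}x(t) extending continuously to [0,+∞), satisfying x(t) = x₀ t^{β-1} + (1/Γ(β)) ∫₀ᵗ (t-s)^{β-1} [l(s)φ(x(s)) + k(s)] ds for all t>0, and lim_{t→+∞} x(t) = 0. -/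

import Mathlib

/-!
With `a = t^β l`, `b = t^β k` and `δ = β - 1/p > 0`, monotonicity turns the `L^p` hypotheses
into the pointwise bounds `a t ≤ A t^((β-1)(1-μ)+δ)` and `b t ≤ B t^(β-1+δ)` on `(0, 1]`.
After the substitution `s = t τ`, the right-hand side of the equation is a monotone, causal
operator on `[0, ∞]`-valued functions which preserves antitone functions. Its least fixed point
lies below the supersolutions `C t^(β-1)` on every `(0, T]`, so it is finite and antitone, and it
solves the equation. Since the integrand is then monotone in `t`, dominated convergence (off the
countably many discontinuities of a monotone function) gives continuity and the decay at
infinity, and the bound near `0` gives `t^(1-β) x t → x₀`.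
-/

open MeasureTheory Set Filter
open scoped ENNReal Topology

theorem integrableOn_Ioo_one_sub_rpow_mul_rpow {b c : ℝ} (hb : -1 < b) (hc : -1 < c) :
    IntegrableOn (fun τ : ℝ => (1 - τ) ^ b * τ ^ c) (Ioo 0 1) := by
  have hsplit : Ioo (0:ℝ) 1 ⊆ Ioc 0 (1 / 2) ∪ Ioo (1 / 2) 1 := fun τ hτ => by
    rcases le_or_gt τ (1 / 2) with h | h
    exacts [Or.inl ⟨hτ.1, h⟩, Or.inr ⟨h, hτ.2⟩]
  refine IntegrableOn.mono_set (IntegrableOn.union ?_ ?_) hsplit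
  · have hpow : IntegrableOn (fun τ : ℝ => τ ^ c) (Ioc 0 (1 / 2)) :=
      (intervalIntegrable_iff_integrableOn_Ioc_of_le (by norm_num)).1
        (intervalIntegral.intervalIntegrable_rpow' hc)
    refine hpow.continuousOn_mul_of_subset ?_ isCompact_Icc measurableSet_Ioc Ioc_subset_Icc_self
    exact (continuousOn_const.sub continuousOn_id).rpow_const
      fun τ hτ => Or.inl (show (1:ℝ) - τ ≠ 0 by linarith [hτ.2])
  · have hpow : IntegrableOn (fun τ : ℝ => (1 - τ) ^ b) (Ioc (1 / 2) 1) := by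
      have := ((intervalIntegral.intervalIntegrable_rpow' hb (a := 0) (b := 1 / 2)).comp_sub_left
        1).symm
      norm_num at this
      exact (intervalIntegrable_iff_integrableOn_Ioc_of_le (by norm_num)).1 this
    refine (hpow.mono_set Ioo_subset_Ioc_self).mul_continuousOn_of_subset ?_ measurableSet_Ioo
      isCompact_Icc Ioo_subset_Icc_self
    exact continuousOn_id.rpow_const fun τ hτ => Or.inl (show τ ≠ 0 by linarith [hτ.1])

theorem min_mul_rpow_le_rpow {s σ : ℝ} (e : ℝ) (hs : 0 < s) (hσ : σ ∈ Ioc (s / 2) s) :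
    min ((2:ℝ)⁻¹ ^ e) 1 * s ^ e ≤ σ ^ e := by
  have hσ0 : 0 < σ := by linarith [hσ.1]
  rcases le_or_gt 0 e with he | he
  · calc min ((2:ℝ)⁻¹ ^ e) 1 * s ^ e ≤ (2:ℝ)⁻¹ ^ e * s ^ e := by gcongr; exact min_le_left _ _
      _ = (s / 2) ^ e := by rw [← Real.mul_rpow (by norm_num) hs.le]; ring_nf
      _ ≤ σ ^ e := Real.rpow_le_rpow (by positivity) hσ.1.le he
  · calc min ((2:ℝ)⁻¹ ^ e) 1 * s ^ e ≤ 1 * s ^ e := by gcongr; exact min_le_right _ _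
      _ ≤ σ ^ e := by rw [one_mul]; exact Real.rpow_le_rpow_of_nonpos hσ0 hσ.2 he.le

/-- Chebyshev's inequality on `(s/2, s]`, where `σ^e f σ` is at least a fixed multiple of
`s^e f s`. -/
theorem exists_le_mul_rpow_of_antitoneOn {f : ℝ → ℝ} {e p : ℝ} (hp : 0 < p)
    (hf0 : ∀ s ∈ Ioi (0:ℝ), 0 ≤ f s) (hf : AntitoneOn f (Ioi 0))
    (hint : IntegrableOn (fun s => |s ^ e * f s| ^ p) (Ioc 0 1)) :
    ∃ C, 0 ≤ C ∧ ∀ s ∈ Ioc (0:ℝ) 1, f s ≤ C * s ^ (-e - 1 / p) := by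
  set I := ∫ s in Ioc (0:ℝ) 1, |s ^ e * f s| ^ p
  set m := min ((2:ℝ)⁻¹ ^ e) 1
  have hm : 0 < m := lt_min (by positivity) one_pos
  have hI : 0 ≤ I := setIntegral_nonneg measurableSet_Ioc fun _ _ => by positivity
  refine ⟨m⁻¹ * (2 * I) ^ (1 / p), by positivity, fun s ⟨hs0, hs1⟩ => ?_⟩
  have hv : 0 ≤ m * s ^ e * f s := mul_nonneg (by positivity) (hf0 s hs0)
  have hlow : ∀ σ ∈ Ioc (s / 2) s, (m * s ^ e * f s) ^ p ≤ |σ ^ e * f σ| ^ p := by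
    intro σ hσ
    have hσ0 : 0 < σ := by linarith [hσ.1]
    refine Real.rpow_le_rpow hv (le_trans ?_ (le_abs_self _)) hp.le
    exact mul_le_mul (min_mul_rpow_le_rpow e hs0 hσ) (hf hσ0 hs0 hσ.2) (hf0 s hs0) (by positivity)
  have hcheb : (m * s ^ e * f s) ^ p * (s / 2) ≤ I := by
    have hsub : Ioc (s / 2) s ⊆ Ioc 0 1 := Ioc_subset_Ioc (by linarith) hs1
    calc (m * s ^ e * f s) ^ p * (s / 2)
        = (m * s ^ e * f s) ^ p * volume.real (Ioc (s / 2) s) := by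
          rw [Real.volume_real_Ioc_of_le (by linarith)]; ring
      _ ≤ ∫ σ in Ioc (s / 2) s, |σ ^ e * f σ| ^ p :=
          setIntegral_ge_of_const_le_real measurableSet_Ioc measure_Ioc_lt_top.ne hlow
            (hint.mono_set hsub)
      _ ≤ I := setIntegral_mono_set hint (Eventually.of_forall fun _ => by positivity)
            hsub.eventuallyLE
  have hroot : m * s ^ e * f s ≤ (2 * I) ^ (1 / p) * s ^ (-(1 / p)) := by
    rw [Real.rpow_neg hs0.le, ← Real.inv_rpow hs0.le, ← Real.mul_rpow (by positivity)
      (by positivity), ← Real.rpow_le_rpow_iff hv (by positivity) hp,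
      ← Real.rpow_mul (by positivity), one_div_mul_cancel hp.ne', Real.rpow_one,
      ← div_eq_mul_inv, le_div_iff₀ hs0]
    linarith
  calc f s = m⁻¹ * s ^ (-e) * (m * s ^ e * f s) := by
        rw [Real.rpow_neg hs0.le]; field_simp
    _ ≤ m⁻¹ * s ^ (-e) * ((2 * I) ^ (1 / p) * s ^ (-(1 / p))) := by gcongr
    _ = m⁻¹ * (2 * I) ^ (1 / p) * s ^ (-e - 1 / p) := by
        rw [sub_eq_add_neg, Real.rpow_add hs0]; ring

theorem exists_rpow_mul_le_of_integrableOn {g : ℝ → ℝ} {α β p : ℝ} (hp : 0 < p)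
    (h0 : ∀ s ∈ Ioi (0:ℝ), 0 ≤ s ^ β * g s) (hanti : AntitoneOn (fun s => s ^ β * g s) (Ioi 0))
    (hint : IntegrableOn (fun s => |s ^ α * g s| ^ p) (Ioc 0 1)) :
    ∃ C, 0 ≤ C ∧ ∀ s ∈ Ioc (0:ℝ) 1, s ^ β * g s ≤ C * s ^ (β - α - 1 / p) := by
  have hint' : IntegrableOn (fun s => |s ^ (α - β) * (s ^ β * g s)| ^ p) (Ioc 0 1) := by
    refine hint.congr_fun (fun s hs => ?_) measurableSet_Ioc
    rw [← mul_assoc, ← Real.rpow_add hs.1, sub_add_cancel]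
  obtain ⟨C, hC, hle⟩ := exists_le_mul_rpow_of_antitoneOn hp h0 hanti hint'
  exact ⟨C, hC, fun s hs => by simpa only [neg_sub, sub_sub] using hle s hs⟩

theorem exists_add_mul_rpow_le {μ c D : ℝ} (hμ0 : 0 ≤ μ) (hμ1 : μ < 1) (hc : 0 ≤ c)
    (hD : 0 ≤ D) : ∃ C, 1 ≤ C ∧ c + D * C ^ μ ≤ C := by
  set C := max 1 ((c + D) ^ (1 / (1 - μ)))
  have hC : 1 ≤ C := le_max_left _ _
  have hCμ : 1 ≤ C ^ μ := Real.one_le_rpow hC hμ0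
  have hroot : c + D ≤ C ^ (1 - μ) :=
    calc c + D = ((c + D) ^ (1 / (1 - μ))) ^ (1 - μ) := by
          rw [← Real.rpow_mul (by positivity), one_div_mul_cancel (by linarith), Real.rpow_one]
      _ ≤ C ^ (1 - μ) :=
          Real.rpow_le_rpow (by positivity) (le_max_right _ _) (by linarith)
  refine ⟨C, hC, ?_⟩
  calc c + D * C ^ μ ≤ (c + D) * C ^ μ := by nlinarith
    _ ≤ C ^ (1 - μ) * C ^ μ := by gcongr
    _ = C := by rw [← Real.rpow_add (by linarith), sub_add_cancel, Real.rpow_one]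

theorem tendsto_rpow_one_sub_mul_nhdsGT_zero {β δ c K : ℝ} {x r : ℝ → ℝ} (hδ : 0 < δ)
    (hx : ∀ t ∈ Ioi (0:ℝ), x t = c * t ^ (β - 1) + r t)
    (hr : ∀ t ∈ Ioc (0:ℝ) 1, 0 ≤ r t ∧ r t ≤ K * t ^ (β - 1 + δ)) :
    Tendsto (fun t => t ^ (1 - β) * x t) (𝓝[>] 0) (𝓝 c) := by
  have hpow : Tendsto (fun t : ℝ => c + K * t ^ δ) (𝓝[>] 0) (𝓝 c) := by
    have h := ((Real.continuousAt_rpow_const 0 δ (Or.inr hδ.le)).tendsto.const_mul K).const_add c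
    rw [Real.zero_rpow hδ.ne', mul_zero, add_zero] at h
    exact h.mono_left nhdsWithin_le_nhds
  have hbounds : ∀ t ∈ Ioc (0:ℝ) 1, c ≤ t ^ (1 - β) * x t ∧ t ^ (1 - β) * x t ≤ c + K * t ^ δ := by
    intro t ht
    have hform : t ^ (1 - β) * x t = c + t ^ (1 - β) * r t := by
      rw [hx t ht.1, mul_add, ← mul_assoc, mul_comm _ c, mul_assoc, ← Real.rpow_add ht.1,
        sub_add_sub_cancel', sub_self, Real.rpow_zero, mul_one]
    have hr0 : 0 ≤ t ^ (1 - β) * r t := mul_nonneg (Real.rpow_nonneg ht.1.le _) (hr t ht).1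
    have hrK : t ^ (1 - β) * r t ≤ K * t ^ δ := by
      calc t ^ (1 - β) * r t ≤ t ^ (1 - β) * (K * t ^ (β - 1 + δ)) :=
            mul_le_mul_of_nonneg_left (hr t ht).2 (Real.rpow_nonneg ht.1.le _)
        _ = K * t ^ δ := by
            rw [mul_left_comm, ← Real.rpow_add ht.1]; ring_nf
    rw [hform]
    exact ⟨by linarith, by linarith⟩
  refine tendsto_of_tendsto_of_tendsto_of_le_of_le' tendsto_const_nhds hpow ?_ ?_ <;>
    filter_upwards [Ioc_mem_nhdsGT zero_lt_one] with t ht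
  exacts [(hbounds t ht).1, (hbounds t ht).2]

theorem continuousOn_Ici_update_zero {f : ℝ → ℝ} {c : ℝ} (hf : ContinuousOn f (Ioi 0))
    (hlim : Tendsto f (𝓝[>] 0) (𝓝 c)) : ContinuousOn (Function.update f 0 c) (Ici 0) := by
  intro t (ht : 0 ≤ t)
  rcases ht.eq_or_lt with rfl | ht
  · rwa [continuousWithinAt_update_same, Ici_sdiff_left]
  · exact ((continuousAt_update_of_ne ht.ne').2
      (hf.continuousAt (Ioi_mem_nhds ht))).continuousWithinAt

section ScaledIntegral

variable {w g : ℝ → ℝ}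

theorem aestronglyMeasurable_mul_comp_mul {t : ℝ} (hw : ContinuousOn w (Ioo 0 1))
    (hg : AntitoneOn g (Ioi 0)) (ht : 0 < t) :
    AEStronglyMeasurable (fun τ => w τ * g (t * τ)) (volume.restrict (Ioo 0 1)) := by
  refine ((hw.aemeasurable measurableSet_Ioo).mul ?_).aestronglyMeasurable
  refine aemeasurable_restrict_of_antitoneOn measurableSet_Ioo fun τ₁ h₁ τ₂ h₂ h12 => ?_
  exact hg (mul_pos ht h₁.1) (mul_pos ht h₂.1) (by gcongr)

theorem ae_nonneg_mul_comp_mul (hw : ∀ τ ∈ Ioo (0:ℝ) 1, 0 ≤ w τ)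
    (hg0 : ∀ s ∈ Ioi (0:ℝ), 0 ≤ g s) {t : ℝ} (ht : 0 < t) :
    0 ≤ᵐ[volume.restrict (Ioo 0 1)] fun τ => w τ * g (t * τ) := by
  filter_upwards [ae_restrict_mem measurableSet_Ioo] with τ hτ
  exact mul_nonneg (hw τ hτ) (hg0 _ (mul_pos ht hτ.1))

theorem antitoneOn_integral_mul_comp_mul (hw : ∀ τ ∈ Ioo (0:ℝ) 1, 0 ≤ w τ)
    (hg : AntitoneOn g (Ioi 0))
    (hint : ∀ t ∈ Ioi (0:ℝ), IntegrableOn (fun τ => w τ * g (t * τ)) (Ioo 0 1)) :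
    AntitoneOn (fun t => ∫ τ in Ioo 0 1, w τ * g (t * τ)) (Ioi 0) := by
  intro t₁ h₁ t₂ h₂ h12
  refine setIntegral_mono_on (hint t₂ h₂) (hint t₁ h₁) measurableSet_Ioo fun τ hτ => ?_
  exact mul_le_mul_of_nonneg_left
    (hg (mul_pos h₁ hτ.1) (mul_pos h₂ hτ.1) (by gcongr; exact hτ.1.le)) (hw τ hτ)

/-- Dominated convergence, with `w τ * g (t₀ τ / 2)` as dominating function; `g` is continuous
off a countable set since it is monotone. -/
theorem continuousOn_integral_mul_comp_mul (hw : ∀ τ ∈ Ioo (0:ℝ) 1, 0 ≤ w τ)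
    (hg0 : ∀ s ∈ Ioi (0:ℝ), 0 ≤ g s) (hg : AntitoneOn g (Ioi 0))
    (hint : ∀ t ∈ Ioi (0:ℝ), IntegrableOn (fun τ => w τ * g (t * τ)) (Ioo 0 1)) :
    ContinuousOn (fun t => ∫ τ in Ioo 0 1, w τ * g (t * τ)) (Ioi 0) := by
  intro t₀ (ht₀ : 0 < t₀)
  refine ContinuousAt.continuousWithinAt ?_
  have hdisc : ∀ᵐ τ ∂(volume.restrict (Ioo (0:ℝ) 1)), ContinuousAt g (t₀ * τ) ∨ t₀ * τ ≤ 0 := by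
    have hc := (hg.countable_not_continuousWithinAt.preimage
      (mul_right_injective₀ ht₀.ne')).measure_zero volume
    refine ae_restrict_of_ae (measure_eq_zero_iff_ae_notMem.1 hc |>.mono fun τ hτ => ?_)
    by_contra! h
    exact hτ ⟨h.2, fun hcont => h.1 (hcont.continuousAt (Ioi_mem_nhds h.2))⟩
  refine tendsto_integral_filter_of_dominated_convergence (fun τ => w τ * g (t₀ / 2 * τ)) ?_ ?_
    (hint _ (half_pos ht₀)) ?_
  · filter_upwards [Ioi_mem_nhds ht₀] with t ht using (hint t ht).aestronglyMeasurable
  · filter_upwards [Ici_mem_nhds (half_lt_self ht₀), Ioi_mem_nhds ht₀] with t ht2 ht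
    filter_upwards [ae_restrict_mem measurableSet_Ioo] with τ hτ
    rw [Real.norm_of_nonneg (mul_nonneg (hw τ hτ) (hg0 _ (mul_pos ht hτ.1)))]
    exact mul_le_mul_of_nonneg_left (hg (mul_pos (half_pos ht₀) hτ.1) (mul_pos ht hτ.1)
      (by gcongr; exacts [hτ.1.le, ht2])) (hw τ hτ)
  · filter_upwards [hdisc, ae_restrict_mem measurableSet_Ioo] with τ hcont hτ
    have hcont := hcont.resolve_right (not_le.2 (mul_pos ht₀ hτ.1))
    exact (hcont.tendsto.comp ((continuous_mul_const τ).tendsto t₀)).const_mul (w τ)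

theorem tendsto_integral_mul_comp_mul_atTop (hw : ∀ τ ∈ Ioo (0:ℝ) 1, 0 ≤ w τ)
    (hg0 : ∀ s ∈ Ioi (0:ℝ), 0 ≤ g s) (hg : AntitoneOn g (Ioi 0))
    (hint : ∀ t ∈ Ioi (0:ℝ), IntegrableOn (fun τ => w τ * g (t * τ)) (Ioo 0 1))
    (hlim : Tendsto g atTop (𝓝 0)) :
    Tendsto (fun t => ∫ τ in Ioo 0 1, w τ * g (t * τ)) atTop (𝓝 0) := by
  have key := tendsto_integral_filter_of_dominated_convergence (l := atTop)
    (F := fun t τ => w τ * g (t * τ)) (f := fun _ => 0) (fun τ => w τ * g (1 * τ)) ?_ ?_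
    (hint 1 (mem_Ioi.2 one_pos)) ?_
  · simpa using key
  · filter_upwards [eventually_gt_atTop 0] with t ht using (hint t ht).aestronglyMeasurable
  · filter_upwards [eventually_ge_atTop 1] with t ht
    filter_upwards [ae_restrict_mem measurableSet_Ioo] with τ hτ
    have ht0 : 0 < t := by linarith
    rw [Real.norm_of_nonneg (mul_nonneg (hw τ hτ) (hg0 _ (mul_pos ht0 hτ.1)))]
    exact mul_le_mul_of_nonneg_left (hg (mul_pos one_pos hτ.1) (mul_pos ht0 hτ.1)
      (by gcongr; exact hτ.1.le)) (hw τ hτ)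
  · filter_upwards [ae_restrict_mem measurableSet_Ioo] with τ hτ
    simpa using (hlim.comp (tendsto_id.atTop_mul_const hτ.1)).const_mul (w τ)

end ScaledIntegral

section IntegralForm

variable {β c d : ℝ} {w g x : ℝ → ℝ}

theorem continuousOn_of_eq_add_integral (hw : ∀ τ ∈ Ioo (0:ℝ) 1, 0 ≤ w τ)
    (hg0 : ∀ s ∈ Ioi (0:ℝ), 0 ≤ g s) (hg : AntitoneOn g (Ioi 0))
    (hint : ∀ t ∈ Ioi (0:ℝ), IntegrableOn (fun τ => w τ * g (t * τ)) (Ioo 0 1))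
    (hx : ∀ t ∈ Ioi (0:ℝ), x t = c * t ^ (β - 1) + d * ∫ τ in Ioo 0 1, w τ * g (t * τ)) :
    ContinuousOn x (Ioi 0) :=
  ((continuousOn_const.mul (continuousOn_id.rpow_const fun _ ht => Or.inl (ne_of_gt ht))).add
    (continuousOn_const.mul (continuousOn_integral_mul_comp_mul hw hg0 hg hint))).congr hx

theorem strictAntiOn_of_eq_add_integral (hc : 0 < c) (hβ : β < 1) (hd : 0 ≤ d)
    (hw : ∀ τ ∈ Ioo (0:ℝ) 1, 0 ≤ w τ) (hg : AntitoneOn g (Ioi 0))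
    (hint : ∀ t ∈ Ioi (0:ℝ), IntegrableOn (fun τ => w τ * g (t * τ)) (Ioo 0 1))
    (hx : ∀ t ∈ Ioi (0:ℝ), x t = c * t ^ (β - 1) + d * ∫ τ in Ioo 0 1, w τ * g (t * τ)) :
    StrictAntiOn x (Ioi 0) := by
  intro t₁ h₁ t₂ h₂ h12
  rw [hx t₁ h₁, hx t₂ h₂]
  exact add_lt_add_of_lt_of_le
    (mul_lt_mul_of_pos_left (Real.rpow_lt_rpow_of_neg h₁ h12 (by linarith)) hc)
    (mul_le_mul_of_nonneg_left (antitoneOn_integral_mul_comp_mul hw hg hint h₁ h₂ h12.le) hd)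

theorem tendsto_atTop_of_eq_add_integral (hβ : β < 1) (hw : ∀ τ ∈ Ioo (0:ℝ) 1, 0 ≤ w τ)
    (hg0 : ∀ s ∈ Ioi (0:ℝ), 0 ≤ g s) (hg : AntitoneOn g (Ioi 0))
    (hint : ∀ t ∈ Ioi (0:ℝ), IntegrableOn (fun τ => w τ * g (t * τ)) (Ioo 0 1))
    (hglim : Tendsto g atTop (𝓝 0))
    (hx : ∀ t ∈ Ioi (0:ℝ), x t = c * t ^ (β - 1) + d * ∫ τ in Ioo 0 1, w τ * g (t * τ)) :
    Tendsto x atTop (𝓝 0) := by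
  have hpow : Tendsto (fun t : ℝ => t ^ (β - 1)) atTop (𝓝 0) := by
    simpa using tendsto_rpow_neg_atTop (y := 1 - β) (by linarith)
  have hlim := (hpow.const_mul c).add
    ((tendsto_integral_mul_comp_mul_atTop hw hg0 hg hint hglim).const_mul d)
  rw [mul_zero, mul_zero, add_zero] at hlim
  refine hlim.congr' ?_
  filter_upwards [eventually_gt_atTop 0] with t ht
  exact (hx t ht).symm

theorem exists_continuousOn_Ici_eq_rpow_mul {δ K : ℝ} (hc : 0 ≤ c) (hd : 0 ≤ d) (hδ : 0 < δ)
    (hw : ∀ τ ∈ Ioo (0:ℝ) 1, 0 ≤ w τ) (hg0 : ∀ s ∈ Ioi (0:ℝ), 0 ≤ g s)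
    (hK : ∀ t ∈ Ioc (0:ℝ) 1, ∫ τ in Ioo 0 1, w τ * g (t * τ) ≤ K * t ^ (β - 1 + δ))
    (hxc : ContinuousOn x (Ioi 0)) (hx0 : ∀ t ∈ Ioi (0:ℝ), 0 ≤ x t)
    (hx : ∀ t ∈ Ioi (0:ℝ), x t = c * t ^ (β - 1) + d * ∫ τ in Ioo 0 1, w τ * g (t * τ)) :
    ∃ X : ℝ → ℝ, ContinuousOn X (Ici 0) ∧ (∀ t ∈ Ici (0:ℝ), 0 ≤ X t) ∧
      ∀ t ∈ Ioi (0:ℝ), X t = t ^ (1 - β) * x t := by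
  refine ⟨Function.update (fun t => t ^ (1 - β) * x t) 0 c, ?_, fun t (ht : 0 ≤ t) => ?_,
    fun t (ht : 0 < t) => Function.update_of_ne ht.ne' _ _⟩
  · refine continuousOn_Ici_update_zero
      ((continuousOn_id.rpow_const fun _ ht => Or.inl (ne_of_gt ht)).mul hxc)
      (tendsto_rpow_one_sub_mul_nhdsGT_zero (K := d * K) hδ hx fun t ht => ⟨?_, ?_⟩)
    · exact mul_nonneg hd (setIntegral_nonneg measurableSet_Ioo fun τ hτ =>
        mul_nonneg (hw τ hτ) (hg0 _ (mul_pos ht.1 hτ.1)))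
    · rw [mul_assoc]
      exact mul_le_mul_of_nonneg_left (hK t ht) hd
  · rcases ht.eq_or_lt with rfl | ht
    · simpa using hc
    · rw [Function.update_of_ne ht.ne']
      exact mul_nonneg (Real.rpow_nonneg ht.le _) (hx0 t ht)

end IntegralForm

/-- Under the substitution `s = t τ`, `(t - s)^(β-1) h(s) ds` becomes
`rlKernel β τ · (t τ)^β h(t τ) dτ`. -/
noncomputable def rlKernel (β τ : ℝ) : ℝ := (1 - τ) ^ (β - 1) * τ ^ (-β)

theorem rlKernel_nonneg (β : ℝ) {τ : ℝ} (hτ : τ ∈ Ioo (0:ℝ) 1) : 0 ≤ rlKernel β τ :=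
  mul_nonneg (Real.rpow_nonneg (by linarith [hτ.2]) _) (Real.rpow_nonneg hτ.1.le _)

theorem continuousOn_rlKernel (β : ℝ) : ContinuousOn (rlKernel β) (Ioo 0 1) := by
  refine ContinuousOn.mul ?_ ?_
  · exact (continuousOn_const.sub continuousOn_id).rpow_const
      fun τ hτ => Or.inl (show (1:ℝ) - τ ≠ 0 by linarith [hτ.2])
  · exact continuousOn_id.rpow_const fun τ hτ => Or.inl (show τ ≠ 0 from hτ.1.ne')

theorem rlKernel_mul_rpow {β γ t τ : ℝ} (ht : 0 < t) (hτ : 0 < τ) :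
    rlKernel β τ * (t * τ) ^ γ = t ^ γ * ((1 - τ) ^ (β - 1) * τ ^ (γ - β)) := by
  rw [rlKernel, Real.mul_rpow ht.le hτ.le, sub_eq_neg_add γ, Real.rpow_add hτ]
  ring

theorem integral_Ioo_rpow_sub_mul_eq {β t : ℝ} (ht : 0 < t) (h : ℝ → ℝ) :
    ∫ s in Ioo 0 t, (t - s) ^ (β - 1) * h s =
      ∫ τ in Ioo 0 1, rlKernel β τ * ((t * τ) ^ β * h (t * τ)) := by
  have hsubst : ∫ s in Ioo 0 t, (t - s) ^ (β - 1) * h s =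
      ∫ τ in Ioo 0 1, t * ((t - t * τ) ^ (β - 1) * h (t * τ)) := by
    have hscale := intervalIntegral.smul_integral_comp_mul_left
      (f := fun s => (t - s) ^ (β - 1) * h s) (a := 0) (b := 1) t
    rw [mul_zero, mul_one, smul_eq_mul] at hscale
    rw [← integral_Ioc_eq_integral_Ioo, ← integral_Ioc_eq_integral_Ioo,
      ← intervalIntegral.integral_of_le ht.le, ← intervalIntegral.integral_of_le zero_le_one,
      intervalIntegral.integral_const_mul, hscale]
  rw [hsubst]
  refine setIntegral_congr_fun measurableSet_Ioo fun τ hτ => ?_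
  have hkernel := rlKernel_mul_rpow (β := β) (γ := β) ht hτ.1
  rw [sub_self, Real.rpow_zero, mul_one] at hkernel
  rw [← mul_assoc, ← mul_assoc, hkernel, show t - t * τ = t * (1 - τ) by ring,
    Real.mul_rpow ht.le (by linarith [hτ.2]), Real.rpow_sub_one ht.ne']
  field_simp

section Causal

variable {α : Type*} [CompleteLattice α]

def IsCausal (F : (ℝ → α) →o (ℝ → α)) : Prop :=
  ∀ ⦃y z : ℝ → α⦄ ⦃t : ℝ⦄, 0 < t → (∀ s ∈ Ioo 0 t, y s ≤ z s) → F y t ≤ F z t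

variable {F : (ℝ → α) →o (ℝ → α)}

/-- Comparison principle: `lfp F ⊓ w` on `(0, T]`, extended by `lfp F`, is a pre-fixed point. -/
theorem IsCausal.lfp_le (hF : IsCausal F) {T : ℝ} {w : ℝ → α}
    (hw : ∀ t ∈ Ioc 0 T, F w t ≤ w t) : ∀ t ∈ Ioc 0 T, F.lfp t ≤ w t := by
  classical
  set v : ℝ → α := fun t => if t ∈ Ioc 0 T then F.lfp t ⊓ w t else F.lfp t
  have hv : v ≤ F.lfp := fun t => by
    simp only [v]; split_ifs
    exacts [inf_le_left, le_rfl]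
  have hsuper : F v ≤ v := by
    intro t
    have hlfp : F v t ≤ F.lfp t := (F.mono hv t).trans (congrFun F.map_lfp t).le
    by_cases ht : t ∈ Ioc 0 T
    · simp only [v, if_pos ht]
      refine le_inf hlfp ((hF ht.1 fun s hs => ?_).trans (hw t ht))
      simp only [if_pos (show s ∈ Ioc 0 T from ⟨hs.1, hs.2.le.trans ht.2⟩)]
      exact inf_le_right
    · simpa only [v, if_neg ht] using hlfp
  intro t ht
  have hle := F.lfp_le hsuper t
  simp only [v, if_pos ht] at hle
  exact hle.trans inf_le_right

/-- The running infimum `t ↦ ⨅ s ∈ (0, t], lfp F s` is a pre-fixed point. -/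
theorem IsCausal.antitoneOn_lfp (hF : IsCausal F)
    (hanti : ∀ y, AntitoneOn y (Ioi 0) → AntitoneOn (F y) (Ioi 0)) :
    AntitoneOn F.lfp (Ioi 0) := by
  set y : ℝ → α := fun t => ⨅ s ∈ Ioc 0 t, F.lfp s
  have hy : AntitoneOn y (Ioi 0) := fun t₁ _ t₂ _ h12 =>
    biInf_mono fun s hs => ⟨hs.1, hs.2.trans h12⟩
  have hsuper : F y ≤ y := by
    intro t
    refine le_iInf₂ fun s hs => ?_
    calc F y t ≤ F y s := hanti y hy hs.1 (hs.1.trans_le hs.2) hs.2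
      _ ≤ F F.lfp s := hF hs.1 fun r hr => biInf_le _ ⟨hr.1, le_rfl⟩
      _ = F.lfp s := congrFun F.map_lfp s
  intro t₁ ht₁ t₂ _ h12
  exact (F.lfp_le hsuper t₂).trans (biInf_le _ ⟨ht₁, h12⟩)

end Causal

noncomputable def betaIntegralReal (β δ : ℝ) : ℝ := ∫ τ in Ioo 0 1, (1 - τ) ^ (β - 1) * τ ^ (δ - 1)

theorem betaIntegralReal_nonneg (β δ : ℝ) : 0 ≤ betaIntegralReal β δ :=
  setIntegral_nonneg measurableSet_Ioo fun τ hτ =>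
    mul_nonneg (Real.rpow_nonneg (by linarith [hτ.2]) _) (Real.rpow_nonneg hτ.1.le _)

noncomputable def source (a b : ℝ → ℝ) (Φ : ℝ≥0∞ →o ℝ≥0∞) (y : ℝ → ℝ≥0∞) (s : ℝ) : ℝ≥0∞ :=
  ENNReal.ofReal (a s) * Φ (y s) + ENNReal.ofReal (b s)

theorem source_le_source {a b : ℝ → ℝ} {Φ : ℝ≥0∞ →o ℝ≥0∞} {y z : ℝ → ℝ≥0∞} {s : ℝ}
    (h : y s ≤ z s) : source a b Φ y s ≤ source a b Φ z s := by
  unfold source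
  gcongr

/-- The right-hand side of the integral equation in the unknowns `a = t^β l`, `b = t^β k`,
after the substitution `s = t τ`. -/
noncomputable def volterraOp (β c : ℝ) (a b : ℝ → ℝ) (Φ : ℝ≥0∞ →o ℝ≥0∞) :
    (ℝ → ℝ≥0∞) →o (ℝ → ℝ≥0∞) where
  toFun y t := ENNReal.ofReal (c * t ^ (β - 1)) + ENNReal.ofReal (Real.Gamma β)⁻¹ *
    ∫⁻ τ in Ioo 0 1, ENNReal.ofReal (rlKernel β τ) * source a b Φ y (t * τ)
  monotone' y z h t := by
    dsimp only
    gcongr with τ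
    exact source_le_source (h _)

section Operator

variable {β c : ℝ} {a b : ℝ → ℝ} {Φ : ℝ≥0∞ →o ℝ≥0∞}

theorem volterraOp_apply (y : ℝ → ℝ≥0∞) (t : ℝ) :
    volterraOp β c a b Φ y t = ENNReal.ofReal (c * t ^ (β - 1)) +
      ENNReal.ofReal (Real.Gamma β)⁻¹ *
        ∫⁻ τ in Ioo 0 1, ENNReal.ofReal (rlKernel β τ) * source a b Φ y (t * τ) :=
  rfl

theorem isCausal_volterraOp : IsCausal (volterraOp β c a b Φ) := by
  intro y z t ht hyz
  simp only [volterraOp_apply]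
  refine add_le_add le_rfl (mul_le_mul_right (setLIntegral_mono' measurableSet_Ioo
    fun τ hτ => ?_) _)
  gcongr
  exact source_le_source (hyz _ ⟨mul_pos ht hτ.1, mul_lt_of_lt_one_right ht hτ.2⟩)

theorem antitoneOn_source (ha : AntitoneOn a (Ioi 0)) (hb : AntitoneOn b (Ioi 0))
    {y : ℝ → ℝ≥0∞} (hy : AntitoneOn y (Ioi 0)) : AntitoneOn (source a b Φ y) (Ioi 0) := by
  intro s₁ h₁ s₂ h₂ h12
  unfold source
  gcongr
  exacts [ha h₁ h₂ h12, hy h₁ h₂ h12, hb h₁ h₂ h12]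

theorem antitoneOn_lintegral_source (ha : AntitoneOn a (Ioi 0)) (hb : AntitoneOn b (Ioi 0))
    {y : ℝ → ℝ≥0∞} (hy : AntitoneOn y (Ioi 0)) :
    AntitoneOn (fun t => ∫⁻ τ in Ioo 0 1, ENNReal.ofReal (rlKernel β τ) * source a b Φ y (t * τ))
      (Ioi 0) := by
  intro t₁ (h₁ : 0 < t₁) t₂ (h₂ : 0 < t₂) h12
  refine setLIntegral_mono' measurableSet_Ioo fun τ hτ => ?_
  gcongr
  exact antitoneOn_source ha hb hy (mul_pos h₁ hτ.1) (mul_pos h₂ hτ.1)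
    (mul_le_mul_of_nonneg_right h12 hτ.1.le)

theorem antitoneOn_volterraOp (hc : 0 ≤ c) (hβ : β ≤ 1) (ha : AntitoneOn a (Ioi 0))
    (hb : AntitoneOn b (Ioi 0)) {y : ℝ → ℝ≥0∞} (hy : AntitoneOn y (Ioi 0)) :
    AntitoneOn (volterraOp β c a b Φ y) (Ioi 0) := by
  intro t₁ (h₁ : 0 < t₁) t₂ h₂ h12
  simp only [volterraOp_apply]
  gcongr ENNReal.ofReal (c * ?_) + _ * ?_
  · exact Real.rpow_le_rpow_of_nonpos h₁ h12 (by linarith)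
  · exact antitoneOn_lintegral_source ha hb hy h₁ h₂ h12

end Operator

section Estimates

variable {β c μ δ M A B C : ℝ} {a b : ℝ → ℝ} {Φ : ℝ≥0∞ →o ℝ≥0∞}

theorem source_le_rpow (hM : 0 ≤ M) (hA : 0 ≤ A) (hB : 0 ≤ B) (hC : 0 ≤ C)
    (hΦ : ∀ r, 0 ≤ r → Φ (ENNReal.ofReal r) ≤ ENNReal.ofReal (M * r ^ μ))
    (haA : ∀ s ∈ Ioc (0:ℝ) 1, a s ≤ A * s ^ ((β - 1) * (1 - μ) + δ))
    (hbB : ∀ s ∈ Ioc (0:ℝ) 1, b s ≤ B * s ^ (β - 1 + δ))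
    {y : ℝ → ℝ≥0∞} {s : ℝ} (hs : s ∈ Ioc (0:ℝ) 1)
    (hy : y s ≤ ENNReal.ofReal (C * s ^ (β - 1))) :
    source a b Φ y s ≤ ENNReal.ofReal ((M * A * C ^ μ + B) * s ^ (β - 1 + δ)) := by
  have hs0 := hs.1
  have hΦy : Φ (y s) ≤ ENNReal.ofReal (M * (C * s ^ (β - 1)) ^ μ) :=
    (Φ.mono hy).trans (hΦ _ (by positivity))
  have hpow : A * s ^ ((β - 1) * (1 - μ) + δ) * (M * (C * s ^ (β - 1)) ^ μ) =
      M * A * C ^ μ * s ^ (β - 1 + δ) := by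
    rw [Real.mul_rpow hC (by positivity), ← Real.rpow_mul hs0.le]
    calc _ = M * A * C ^ μ * (s ^ ((β - 1) * (1 - μ) + δ) * s ^ ((β - 1) * μ)) := by ring
      _ = _ := by rw [← Real.rpow_add hs0]; ring_nf
  calc source a b Φ y s ≤ ENNReal.ofReal (A * s ^ ((β - 1) * (1 - μ) + δ)) *
        ENNReal.ofReal (M * (C * s ^ (β - 1)) ^ μ) + ENNReal.ofReal (B * s ^ (β - 1 + δ)) := by
        unfold source
        gcongr
        exacts [haA s hs, hbB s hs]
    _ = _ := by
        rw [← ENNReal.ofReal_mul (by positivity), hpow,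
          ← ENNReal.ofReal_add (by positivity) (by positivity), add_mul]

theorem lintegral_source_le_of_mem_Ioc_one (hβ : 0 < β) (hδ : 0 < δ) (hM : 0 ≤ M) (hA : 0 ≤ A)
    (hB : 0 ≤ B) (hC : 0 ≤ C)
    (hΦ : ∀ r, 0 ≤ r → Φ (ENNReal.ofReal r) ≤ ENNReal.ofReal (M * r ^ μ))
    (haA : ∀ s ∈ Ioc (0:ℝ) 1, a s ≤ A * s ^ ((β - 1) * (1 - μ) + δ))
    (hbB : ∀ s ∈ Ioc (0:ℝ) 1, b s ≤ B * s ^ (β - 1 + δ))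
    {y : ℝ → ℝ≥0∞} (hy : ∀ s ∈ Ioc (0:ℝ) 1, y s ≤ ENNReal.ofReal (C * s ^ (β - 1)))
    {t : ℝ} (ht : t ∈ Ioc (0:ℝ) 1) :
    ∫⁻ τ in Ioo 0 1, ENNReal.ofReal (rlKernel β τ) * source a b Φ y (t * τ) ≤
      ENNReal.ofReal ((M * A * C ^ μ + B) * betaIntegralReal β δ * t ^ (β - 1 + δ)) := by
  set K := M * A * C ^ μ + B
  have hK : 0 ≤ K := by positivity
  have hbeta := integrableOn_Ioo_one_sub_rpow_mul_rpow (b := β - 1) (c := δ - 1)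
    (by linarith) (by linarith)
  calc ∫⁻ τ in Ioo 0 1, ENNReal.ofReal (rlKernel β τ) * source a b Φ y (t * τ)
      ≤ ∫⁻ τ in Ioo 0 1, ENNReal.ofReal (K * t ^ (β - 1 + δ)) *
          ENNReal.ofReal ((1 - τ) ^ (β - 1) * τ ^ (δ - 1)) := by
        refine setLIntegral_mono' measurableSet_Ioo fun τ hτ => ?_
        have hs : t * τ ∈ Ioc (0:ℝ) 1 := ⟨mul_pos ht.1 hτ.1, mul_le_one₀ ht.2 hτ.1.le hτ.2.le⟩
        have hkernel := rlKernel_mul_rpow (β := β) (γ := β - 1 + δ) ht.1 hτ.1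
        rw [show β - 1 + δ - β = δ - 1 by ring] at hkernel
        calc ENNReal.ofReal (rlKernel β τ) * source a b Φ y (t * τ)
            ≤ ENNReal.ofReal (rlKernel β τ) * ENNReal.ofReal (K * (t * τ) ^ (β - 1 + δ)) := by
              gcongr
              exact source_le_rpow hM hA hB hC hΦ haA hbB hs (hy _ hs)
          _ = _ := by
              rw [← ENNReal.ofReal_mul (rlKernel_nonneg β hτ),
                ← ENNReal.ofReal_mul (mul_nonneg hK (Real.rpow_nonneg ht.1.le _))]
              congr 1
              linear_combination K * hkernel
    _ = ENNReal.ofReal (K * t ^ (β - 1 + δ)) * ENNReal.ofReal (betaIntegralReal β δ) := by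
        rw [lintegral_const_mul' _ _ ENNReal.ofReal_ne_top, betaIntegralReal,
          ofReal_integral_eq_lintegral_ofReal hbeta]
        filter_upwards [ae_restrict_mem measurableSet_Ioo] with τ hτ
        exact mul_nonneg (Real.rpow_nonneg (by linarith [hτ.2]) _) (Real.rpow_nonneg hτ.1.le _)
    _ = _ := by
        rw [← ENNReal.ofReal_mul (mul_nonneg hK (Real.rpow_nonneg ht.1.le _))]
        ring_nf

/-- On `(0, 1]` this is `lintegral_source_le_of_mem_Ioc_one`; on `[1, T]` the integral is
antitone in `t`. -/
theorem lintegral_source_le_rpow (hβ0 : 0 < β) (hβ1 : β < 1) (hδ : 0 < δ) (hM : 0 ≤ M)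
    (hA : 0 ≤ A) (hB : 0 ≤ B) (hC : 0 ≤ C)
    (hΦ : ∀ r, 0 ≤ r → Φ (ENNReal.ofReal r) ≤ ENNReal.ofReal (M * r ^ μ))
    (ha : AntitoneOn a (Ioi 0)) (hb : AntitoneOn b (Ioi 0))
    (haA : ∀ s ∈ Ioc (0:ℝ) 1, a s ≤ A * s ^ ((β - 1) * (1 - μ) + δ))
    (hbB : ∀ s ∈ Ioc (0:ℝ) 1, b s ≤ B * s ^ (β - 1 + δ))
    {y : ℝ → ℝ≥0∞} (hy_anti : AntitoneOn y (Ioi 0))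
    (hy : ∀ s ∈ Ioc (0:ℝ) 1, y s ≤ ENNReal.ofReal (C * s ^ (β - 1)))
    {T t : ℝ} (hT : 1 ≤ T) (ht : t ∈ Ioc (0:ℝ) T) :
    ∫⁻ τ in Ioo 0 1, ENNReal.ofReal (rlKernel β τ) * source a b Φ y (t * τ) ≤
      ENNReal.ofReal ((M * A * C ^ μ + B) * betaIntegralReal β δ * T ^ (1 - β) * t ^ (β - 1)) := by
  set K := (M * A * C ^ μ + B) * betaIntegralReal β δ
  have hK : 0 ≤ K := mul_nonneg (by positivity) (betaIntegralReal_nonneg β δ)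
  have hT1 : 1 ≤ T ^ (1 - β) := Real.one_le_rpow hT (by linarith)
  have hbound := fun {t'} (ht' : t' ∈ Ioc (0:ℝ) 1) =>
    lintegral_source_le_of_mem_Ioc_one hβ0 hδ hM hA hB hC hΦ haA hbB hy ht'
  rcases le_or_gt t 1 with ht1 | ht1
  · refine (hbound ⟨ht.1, ht1⟩).trans (ENNReal.ofReal_le_ofReal ?_)
    rw [Real.rpow_add ht.1, mul_assoc K]
    have htδ : t ^ δ ≤ 1 := Real.rpow_le_one ht.1.le ht1 hδ.le
    have htβ : 0 ≤ t ^ (β - 1) := Real.rpow_nonneg ht.1.le _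
    nlinarith [mul_le_mul_of_nonneg_left htδ htβ, mul_le_mul_of_nonneg_left hT1 htβ]
  · refine (antitoneOn_lintegral_source ha hb hy_anti (mem_Ioi.2 one_pos) ht.1 ht1.le).trans
      ((hbound ⟨one_pos, le_rfl⟩).trans (ENNReal.ofReal_le_ofReal ?_))
    have hone : 1 ≤ T ^ (1 - β) * t ^ (β - 1) := by
      calc (1:ℝ) = t ^ (1 - β) * t ^ (β - 1) := by
            rw [← Real.rpow_add ht.1, sub_add_sub_cancel', sub_self, Real.rpow_zero]
        _ ≤ T ^ (1 - β) * t ^ (β - 1) := by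
            gcongr
            exact ht.2
    rw [Real.one_rpow, mul_one, mul_assoc K]
    nlinarith

theorem exists_supersolution (hβ0 : 0 < β) (hβ1 : β < 1) (hc : 0 ≤ c) (hμ0 : 0 ≤ μ)
    (hμ1 : μ < 1) (hδ : 0 < δ) (hM : 0 ≤ M) (hA : 0 ≤ A) (hB : 0 ≤ B)
    (hΦ : ∀ r, 0 ≤ r → Φ (ENNReal.ofReal r) ≤ ENNReal.ofReal (M * r ^ μ))
    (ha : AntitoneOn a (Ioi 0)) (hb : AntitoneOn b (Ioi 0))
    (haA : ∀ s ∈ Ioc (0:ℝ) 1, a s ≤ A * s ^ ((β - 1) * (1 - μ) + δ))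
    (hbB : ∀ s ∈ Ioc (0:ℝ) 1, b s ≤ B * s ^ (β - 1 + δ)) {T : ℝ} (hT : 1 ≤ T) :
    ∃ C, 0 ≤ C ∧ ∀ t ∈ Ioc (0:ℝ) T,
      volterraOp β c a b Φ (fun s => ENNReal.ofReal (C * s ^ (β - 1))) t ≤
        ENNReal.ofReal (C * t ^ (β - 1)) := by
  set J := betaIntegralReal β δ
  have hJ : 0 ≤ J := betaIntegralReal_nonneg β δ
  have hΓ : 0 ≤ (Real.Gamma β)⁻¹ := inv_nonneg.2 (Real.Gamma_pos_of_pos hβ0).le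
  obtain ⟨C, hC1, hCfix⟩ := exists_add_mul_rpow_le hμ0 hμ1 hc
    (D := (Real.Gamma β)⁻¹ * ((M * A + B) * J * T ^ (1 - β))) (by positivity)
  refine ⟨C, by linarith, fun t ht => ?_⟩
  have hCμ : 1 ≤ C ^ μ := Real.one_le_rpow hC1 hμ0
  have hy_anti : AntitoneOn (fun s => ENNReal.ofReal (C * s ^ (β - 1))) (Ioi 0) :=
    fun s₁ h₁ s₂ _ h12 => ENNReal.ofReal_le_ofReal (mul_le_mul_of_nonneg_left
      (Real.rpow_le_rpow_of_nonpos h₁ h12 (by linarith)) (by linarith))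
  have hL := lintegral_source_le_rpow hβ0 hβ1 hδ hM hA hB (by linarith) hΦ ha hb haA hbB hy_anti
    (fun s _ => le_rfl) hT ht
  have hKC : M * A * C ^ μ + B ≤ (M * A + B) * C ^ μ := by nlinarith [mul_nonneg hM hA]
  have htβ : 0 ≤ t ^ (β - 1) := Real.rpow_nonneg ht.1.le _
  calc volterraOp β c a b Φ (fun s => ENNReal.ofReal (C * s ^ (β - 1))) t
      ≤ ENNReal.ofReal (c * t ^ (β - 1)) + ENNReal.ofReal (Real.Gamma β)⁻¹ *
          ENNReal.ofReal ((M * A * C ^ μ + B) * J * T ^ (1 - β) * t ^ (β - 1)) := by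
        rw [volterraOp_apply]
        gcongr
    _ = ENNReal.ofReal
          ((c + (Real.Gamma β)⁻¹ * ((M * A * C ^ μ + B) * J * T ^ (1 - β))) * t ^ (β - 1)) := by
        rw [← ENNReal.ofReal_mul hΓ, ← ENNReal.ofReal_add (by positivity) (by positivity)]
        ring_nf
    _ ≤ ENNReal.ofReal (C * t ^ (β - 1)) := by
        refine ENNReal.ofReal_le_ofReal (mul_le_mul_of_nonneg_right ?_ htβ)
        refine le_trans ?_ hCfix
        have hT0 : 0 ≤ T ^ (1 - β) := by positivity
        have := mul_le_mul_of_nonneg_right hKC (mul_nonneg hJ hT0)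
        nlinarith [mul_le_mul_of_nonneg_left this hΓ]

end Estimates

section Solution

variable {β c μ δ M A B : ℝ} {φ a b : ℝ → ℝ}

theorem antitoneOn_mul_comp_add {x : ℝ → ℝ} (hφ0 : ∀ r ∈ Ici (0:ℝ), 0 ≤ φ r)
    (hφ : MonotoneOn φ (Ici 0)) (ha0 : ∀ s ∈ Ioi (0:ℝ), 0 ≤ a s) (ha : AntitoneOn a (Ioi 0))
    (hb : AntitoneOn b (Ioi 0)) (hx0 : ∀ s ∈ Ioi (0:ℝ), 0 ≤ x s) (hx : AntitoneOn x (Ioi 0)) :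
    AntitoneOn (fun s => a s * φ (x s) + b s) (Ioi 0) := fun s₁ h₁ s₂ h₂ h12 =>
  add_le_add (mul_le_mul (ha h₁ h₂ h12) (hφ (hx0 s₂ h₂) (hx0 s₁ h₁) (hx h₁ h₂ h12))
    (hφ0 _ (hx0 s₂ h₂)) (ha0 s₁ h₁)) (hb h₁ h₂ h12)

theorem tendsto_mul_comp_add_atTop {x : ℝ → ℝ} (hφ0 : ∀ r ∈ Ici (0:ℝ), 0 ≤ φ r)
    (hφ : MonotoneOn φ (Ici 0)) (ha0 : ∀ s ∈ Ioi (0:ℝ), 0 ≤ a s) (hb0 : ∀ s ∈ Ioi (0:ℝ), 0 ≤ b s)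
    (hx0 : ∀ s ∈ Ioi (0:ℝ), 0 ≤ x s) (hx : AntitoneOn x (Ioi 0))
    (ha : Tendsto a atTop (𝓝 0)) (hb : Tendsto b atTop (𝓝 0)) :
    Tendsto (fun s => a s * φ (x s) + b s) atTop (𝓝 0) := by
  have hupper : Tendsto (fun s => a s * φ (x 1) + b s) atTop (𝓝 0) := by
    simpa using (ha.mul_const (φ (x 1))).add hb
  refine tendsto_of_tendsto_of_tendsto_of_le_of_le' tendsto_const_nhds hupper ?_ ?_ <;>
    filter_upwards [eventually_ge_atTop 1] with s hs <;> have hs0 : 0 < s := by linarith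
  · exact add_nonneg (mul_nonneg (ha0 s hs0) (hφ0 _ (hx0 s hs0))) (hb0 s hs0)
  · gcongr
    · exact ha0 s hs0
    · exact hφ (hx0 s hs0) (hx0 1 (mem_Ioi.2 one_pos)) (hx (mem_Ioi.2 one_pos) hs0 hs)

noncomputable def extendTop (φ : ℝ → ℝ) (hφ : MonotoneOn φ (Ici 0)) : ℝ≥0∞ →o ℝ≥0∞ where
  toFun r := if r = ⊤ then ⊤ else ENNReal.ofReal (φ r.toReal)
  monotone' r r' h := by
    rcases eq_or_ne r' ⊤ with rfl | hr'
    · simp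
    · have hr : r ≠ ⊤ := ne_top_of_le_ne_top hr' h
      simp only [hr, hr', if_false]
      exact ENNReal.ofReal_le_ofReal
        (hφ ENNReal.toReal_nonneg ENNReal.toReal_nonneg (ENNReal.toReal_mono hr' h))

theorem extendTop_of_ne_top (hφ : MonotoneOn φ (Ici 0)) {r : ℝ≥0∞} (hr : r ≠ ⊤) :
    extendTop φ hφ r = ENNReal.ofReal (φ r.toReal) :=
  if_neg hr

theorem extendTop_ofReal_le (hφ : MonotoneOn φ (Ici 0))
    (hφM : ∀ r ∈ Ici (0:ℝ), φ r ≤ M * r ^ μ) {r : ℝ} (hr : 0 ≤ r) :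
    extendTop φ hφ (ENNReal.ofReal r) ≤ ENNReal.ofReal (M * r ^ μ) := by
  rw [extendTop_of_ne_top hφ ENNReal.ofReal_ne_top, ENNReal.toReal_ofReal hr]
  exact ENNReal.ofReal_le_ofReal (hφM r hr)

/-- The least fixed point lies below the supersolutions `C t^(β-1)` on every `(0, T]`. -/
theorem exists_antitone_fixedPt_volterraOp {Φ : ℝ≥0∞ →o ℝ≥0∞} (hβ0 : 0 < β) (hβ1 : β < 1)
    (hc : 0 ≤ c) (hμ0 : 0 ≤ μ) (hμ1 : μ < 1) (hδ : 0 < δ) (hM : 0 ≤ M) (hA : 0 ≤ A) (hB : 0 ≤ B)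
    (hΦ : ∀ r, 0 ≤ r → Φ (ENNReal.ofReal r) ≤ ENNReal.ofReal (M * r ^ μ))
    (ha : AntitoneOn a (Ioi 0)) (hb : AntitoneOn b (Ioi 0))
    (haA : ∀ s ∈ Ioc (0:ℝ) 1, a s ≤ A * s ^ ((β - 1) * (1 - μ) + δ))
    (hbB : ∀ s ∈ Ioc (0:ℝ) 1, b s ≤ B * s ^ (β - 1 + δ)) :
    ∃ y : ℝ → ℝ≥0∞, volterraOp β c a b Φ y = y ∧ AntitoneOn y (Ioi 0) ∧
      (∀ t ∈ Ioi (0:ℝ), y t ≠ ⊤) ∧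
      ∃ C, 0 ≤ C ∧ ∀ t ∈ Ioc (0:ℝ) 1, y t ≤ ENNReal.ofReal (C * t ^ (β - 1)) := by
  have hbound : ∀ T : ℝ, 1 ≤ T → ∃ C, 0 ≤ C ∧ ∀ t ∈ Ioc (0:ℝ) T,
      (volterraOp β c a b Φ).lfp t ≤ ENNReal.ofReal (C * t ^ (β - 1)) := fun T hT => by
    obtain ⟨C, hC, hsuper⟩ :=
      exists_supersolution (c := c) hβ0 hβ1 hc hμ0 hμ1 hδ hM hA hB hΦ ha hb haA hbB hT
    exact ⟨C, hC, isCausal_volterraOp.lfp_le hsuper⟩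
  refine ⟨(volterraOp β c a b Φ).lfp, OrderHom.map_lfp _,
    isCausal_volterraOp.antitoneOn_lfp fun y hy => antitoneOn_volterraOp hc hβ1.le ha hb hy,
    fun t ht => ?_, hbound 1 le_rfl⟩
  obtain ⟨C, -, hC⟩ := hbound (max t 1) (le_max_right t 1)
  exact ne_top_of_le_ne_top ENNReal.ofReal_ne_top (hC t ⟨ht, le_max_left _ _⟩)

theorem lintegral_source_extendTop_eq (hφ : MonotoneOn φ (Ici 0))
    (hφ0 : ∀ r ∈ Ici (0:ℝ), 0 ≤ φ r) (ha0 : ∀ s ∈ Ioi (0:ℝ), 0 ≤ a s)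
    (hb0 : ∀ s ∈ Ioi (0:ℝ), 0 ≤ b s) {y : ℝ → ℝ≥0∞} (hy : ∀ s ∈ Ioi (0:ℝ), y s ≠ ⊤) {t : ℝ}
    (ht : 0 < t) :
    ∫⁻ τ in Ioo 0 1, ENNReal.ofReal (rlKernel β τ) * source a b (extendTop φ hφ) y (t * τ) =
      ∫⁻ τ in Ioo 0 1, ENNReal.ofReal
        (rlKernel β τ * (a (t * τ) * φ (y (t * τ)).toReal + b (t * τ))) := by
  refine setLIntegral_congr_fun measurableSet_Ioo fun τ hτ => ?_
  have hs : 0 < t * τ := mul_pos ht hτ.1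
  have hφy : 0 ≤ φ (y (t * τ)).toReal := hφ0 _ ENNReal.toReal_nonneg
  rw [source, extendTop_of_ne_top hφ (hy _ hs), ← ENNReal.ofReal_mul (ha0 _ hs),
    ← ENNReal.ofReal_add (mul_nonneg (ha0 _ hs) hφy) (hb0 _ hs),
    ENNReal.ofReal_mul (rlKernel_nonneg β hτ)]

theorem exists_antitone_solution (hβ0 : 0 < β) (hβ1 : β < 1) (hc : 0 ≤ c) (hμ0 : 0 ≤ μ)
    (hμ1 : μ < 1) (hδ : 0 < δ) (hM : 0 ≤ M) (hA : 0 ≤ A) (hB : 0 ≤ B)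
    (hφ0 : ∀ r ∈ Ici (0:ℝ), 0 ≤ φ r) (hφ : MonotoneOn φ (Ici 0))
    (hφM : ∀ r ∈ Ici (0:ℝ), φ r ≤ M * r ^ μ)
    (ha0 : ∀ s ∈ Ioi (0:ℝ), 0 ≤ a s) (ha : AntitoneOn a (Ioi 0))
    (hb0 : ∀ s ∈ Ioi (0:ℝ), 0 ≤ b s) (hb : AntitoneOn b (Ioi 0))
    (haA : ∀ s ∈ Ioc (0:ℝ) 1, a s ≤ A * s ^ ((β - 1) * (1 - μ) + δ))
    (hbB : ∀ s ∈ Ioc (0:ℝ) 1, b s ≤ B * s ^ (β - 1 + δ)) :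
    ∃ x : ℝ → ℝ, (∀ t ∈ Ioi (0:ℝ), 0 ≤ x t) ∧ AntitoneOn x (Ioi 0) ∧
      (∀ t ∈ Ioi (0:ℝ), IntegrableOn
        (fun τ => rlKernel β τ * (a (t * τ) * φ (x (t * τ)) + b (t * τ))) (Ioo 0 1)) ∧
      (∀ t ∈ Ioi (0:ℝ), x t = c * t ^ (β - 1) + (Real.Gamma β)⁻¹ *
        ∫ τ in Ioo 0 1, rlKernel β τ * (a (t * τ) * φ (x (t * τ)) + b (t * τ))) ∧
      ∃ K, ∀ t ∈ Ioc (0:ℝ) 1,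
        ∫ τ in Ioo 0 1, rlKernel β τ * (a (t * τ) * φ (x (t * τ)) + b (t * τ)) ≤
          K * t ^ (β - 1 + δ) := by
  have hΦ := fun r (hr : 0 ≤ r) => extendTop_ofReal_le hφ hφM hr
  obtain ⟨y, hfix, hanti, hfin, C, hC, hC1⟩ := exists_antitone_fixedPt_volterraOp
    hβ0 hβ1 hc hμ0 hμ1 hδ hM hA hB hΦ ha hb haA hbB
  set x : ℝ → ℝ := fun t => (y t).toReal
  set g : ℝ → ℝ := fun s => a s * φ (x s) + b s
  have hx0 : ∀ t ∈ Ioi (0:ℝ), 0 ≤ x t := fun _ _ => ENNReal.toReal_nonneg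
  have hx : AntitoneOn x (Ioi 0) := fun t₁ h₁ t₂ h₂ h12 =>
    ENNReal.toReal_mono (hfin t₁ h₁) (hanti h₁ h₂ h12)
  have hg0 : ∀ s ∈ Ioi (0:ℝ), 0 ≤ g s := fun s hs =>
    add_nonneg (mul_nonneg (ha0 s hs) (hφ0 _ (hx0 s hs))) (hb0 s hs)
  have hg : AntitoneOn g (Ioi 0) := antitoneOn_mul_comp_add hφ0 hφ ha0 ha hb hx0 hx
  have hw := fun τ (hτ : τ ∈ Ioo (0:ℝ) 1) => rlKernel_nonneg β hτ
  have hnn := fun {t} (ht : 0 < t) => ae_nonneg_mul_comp_mul hw hg0 ht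
  have hmeas := fun {t} (ht : 0 < t) =>
    aestronglyMeasurable_mul_comp_mul (continuousOn_rlKernel β) hg ht
  have hΓ : 0 < (Real.Gamma β)⁻¹ := inv_pos.2 (Real.Gamma_pos_of_pos hβ0)
  have hy : ∀ t ∈ Ioi (0:ℝ), y t = ENNReal.ofReal (c * t ^ (β - 1)) +
      ENNReal.ofReal (Real.Gamma β)⁻¹ *
        ∫⁻ τ in Ioo 0 1, ENNReal.ofReal (rlKernel β τ * g (t * τ)) := fun t ht => by
      rw [← lintegral_source_extendTop_eq hφ hφ0 ha0 hb0 hfin ht, ← volterraOp_apply, hfix]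
  have hfin' : ∀ t ∈ Ioi (0:ℝ),
      ∫⁻ τ in Ioo 0 1, ENNReal.ofReal (rlKernel β τ * g (t * τ)) ≠ ⊤ := fun t ht htop => by
    refine hfin t ht ?_
    rw [hy t ht, htop, ENNReal.mul_top (ENNReal.ofReal_pos.2 hΓ).ne', add_top]
  have htoReal : ∀ t ∈ Ioi (0:ℝ), ∫ τ in Ioo 0 1, rlKernel β τ * g (t * τ) =
      (∫⁻ τ in Ioo 0 1, ENNReal.ofReal (rlKernel β τ * g (t * τ))).toReal :=
    fun t ht => integral_eq_lintegral_of_nonneg_ae (hnn ht) (hmeas ht)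
  refine ⟨x, hx0, hx, fun t ht => ⟨hmeas ht, (hasFiniteIntegral_iff_ofReal (hnn ht)).2
    (hfin' t ht).lt_top⟩, fun t ht => ?_, ⟨(M * A * C ^ μ + B) * betaIntegralReal β δ,
    fun t ht => ?_⟩⟩
  · rw [htoReal t ht, ← ENNReal.toReal_ofReal hΓ.le, ← ENNReal.toReal_mul,
      ← ENNReal.toReal_ofReal (mul_nonneg hc (Real.rpow_nonneg (le_of_lt ht) _)),
      ← ENNReal.toReal_add ENNReal.ofReal_ne_top
        (ENNReal.mul_ne_top ENNReal.ofReal_ne_top (hfin' t ht)), ← hy t ht]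
  · rw [htoReal t ht.1]
    refine ENNReal.toReal_le_of_le_ofReal (mul_nonneg (mul_nonneg (by positivity)
      (betaIntegralReal_nonneg β δ)) (Real.rpow_nonneg ht.1.le _)) ?_
    rw [← lintegral_source_extendTop_eq hφ hφ0 ha0 hb0 hfin ht.1]
    exact lintegral_source_le_of_mem_Ioc_one hβ0 hδ hM hA hB hC hΦ haA hbB hC1 ht

end Solution

theorem stmt_11_general (β μ p x₀ M : ℝ)
    (hβ0 : 0 < β) (hβ1 : β < 1) (hμ0 : 0 ≤ μ) (hμ1 : μ < 1) (hp : 1 / β < p)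
    (hx₀ : 0 < x₀) (hM : 0 ≤ M)
    (φ l k : ℝ → ℝ)
    (hφ0 : ∀ t ∈ Ici (0:ℝ), 0 ≤ φ t)
    (hφmono : MonotoneOn φ (Ici 0)) (hφM : ∀ t ∈ Ici (0:ℝ), φ t ≤ M * t ^ μ)
    (hl0 : ∀ t ∈ Ioi (0:ℝ), 0 ≤ t ^ β * l t)
    (hlmono : AntitoneOn (fun t => t ^ β * l t) (Ioi 0))
    (hlLp : IntegrableOn (fun t => |t ^ ((1 - μ) * (1 - β)) * l t| ^ p) (Ioc (0:ℝ) 1))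
    (hk0 : ∀ t ∈ Ioi (0:ℝ), 0 ≤ t ^ β * k t)
    (hkmono : AntitoneOn (fun t => t ^ β * k t) (Ioi 0))
    (hkLp : IntegrableOn (fun t => |t ^ (1 - β) * k t| ^ p) (Ioc (0:ℝ) 1))
    (ha : Tendsto (fun t => t ^ β * l t) atTop (nhds 0))
    (hb : Tendsto (fun t => t ^ β * k t) atTop (nhds 0)) :
    ∃ x : ℝ → ℝ, ContinuousOn x (Ioi 0) ∧ (∀ t ∈ Ioi (0:ℝ), 0 ≤ x t) ∧
      StrictAntiOn x (Ioi 0) ∧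
      (∃ X : ℝ → ℝ, ContinuousOn X (Ici 0) ∧ (∀ t ∈ Ici (0:ℝ), 0 ≤ X t) ∧
        ∀ t ∈ Ioi (0:ℝ), X t = t ^ (1 - β) * x t) ∧
      (∀ t ∈ Ioi (0:ℝ), x t = x₀ * t ^ (β - 1) +
        (1 / Real.Gamma β) *
          ∫ s in Ioo (0:ℝ) t, (t - s) ^ (β - 1) * (l s * φ (x s) + k s)) ∧
      Tendsto x atTop (nhds 0) := by
  have hp0 : 0 < p := (one_div_pos.2 hβ0).trans hp
  have hδ : 0 < β - 1 / p := by
    rw [sub_pos, div_lt_iff₀ hp0]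
    rw [div_lt_iff₀ hβ0] at hp
    linarith
  obtain ⟨A, hA, haA⟩ := exists_rpow_mul_le_of_integrableOn hp0 hl0 hlmono hlLp
  obtain ⟨B, hB, hbB⟩ := exists_rpow_mul_le_of_integrableOn hp0 hk0 hkmono hkLp
  obtain ⟨x, hx0, hx, hint, hxeq, K, hK⟩ := exists_antitone_solution (c := x₀) hβ0 hβ1 hx₀.le
    hμ0 hμ1 hδ hM hA hB hφ0 hφmono hφM hl0 hlmono hk0 hkmono
    (fun s hs => (haA s hs).trans_eq (by congr 2; ring))
    (fun s hs => (hbB s hs).trans_eq (by congr 2; ring))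
  set g : ℝ → ℝ := fun s => s ^ β * l s * φ (x s) + s ^ β * k s
  have hg0 : ∀ s ∈ Ioi (0:ℝ), 0 ≤ g s := fun s hs =>
    add_nonneg (mul_nonneg (hl0 s hs) (hφ0 _ (hx0 s hs))) (hk0 s hs)
  have hg := antitoneOn_mul_comp_add hφ0 hφmono hl0 hlmono hkmono hx0 hx
  have hw := fun τ (hτ : τ ∈ Ioo (0:ℝ) 1) => rlKernel_nonneg β hτ
  have hΓ : 0 ≤ (Real.Gamma β)⁻¹ := inv_nonneg.2 (Real.Gamma_pos_of_pos hβ0).le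
  have hxc := continuousOn_of_eq_add_integral hw hg0 hg hint hxeq
  refine ⟨x, hxc, hx0, strictAntiOn_of_eq_add_integral hx₀ hβ1 hΓ hw hg hint hxeq,
    exists_continuousOn_Ici_eq_rpow_mul hx₀.le hΓ hδ hw hg0 hK hxc hx0 hxeq, fun t ht => ?_,
    tendsto_atTop_of_eq_add_integral hβ1 hw hg0 hg hint
      (tendsto_mul_comp_add_atTop hφ0 hφmono hl0 hk0 hx0 hx ha hb) hxeq⟩
  rw [integral_Ioo_rpow_sub_mul_eq ht, hxeq t ht, one_div]
  congr 3 with τ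
  ring

/-- Theorem 3.4: under hypotheses (1)-(3), with `lim t^β l(t) = 0` and
`lim t^β k(t) = 0`, the equation has at least one decreasing solution in
`C⁺_{1-β}(0, ∞)` tending to `0`. -/
theorem stmt_11 (β μ p x₀ M : ℝ)
    (hβ0 : 0 < β) (hβ1 : β < 1) (hμ0 : 0 ≤ μ) (hμ1 : μ < 1) (hp : 1 / β < p)
    (hx₀ : 0 < x₀) (hM : 0 ≤ M)
    (φ l k : ℝ → ℝ)
    (hφ0 : ∀ t ∈ Ici (0:ℝ), 0 ≤ φ t) (hφc : ContinuousOn φ (Ici 0))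
    (hφmono : MonotoneOn φ (Ici 0)) (hφM : ∀ t ∈ Ici (0:ℝ), φ t ≤ M * t ^ μ)
    (hl0 : ∀ t ∈ Ioi (0:ℝ), 0 ≤ t ^ β * l t)
    (hlc : ContinuousOn (fun t => t ^ β * l t) (Ioi 0))
    (hlmono : AntitoneOn (fun t => t ^ β * l t) (Ioi 0))
    (hlLp : IntegrableOn (fun t => |t ^ ((1 - μ) * (1 - β)) * l t| ^ p) (Ioc (0:ℝ) 1))
    (hk0 : ∀ t ∈ Ioi (0:ℝ), 0 ≤ t ^ β * k t)
    (hkc : ContinuousOn (fun t => t ^ β * k t) (Ioi 0))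
    (hkmono : AntitoneOn (fun t => t ^ β * k t) (Ioi 0))
    (hkLp : IntegrableOn (fun t => |t ^ (1 - β) * k t| ^ p) (Ioc (0:ℝ) 1))
    (ha : Tendsto (fun t => t ^ β * l t) atTop (nhds 0))
    (hb : Tendsto (fun t => t ^ β * k t) atTop (nhds 0)) :
    ∃ x : ℝ → ℝ, ContinuousOn x (Ioi 0) ∧ (∀ t ∈ Ioi (0:ℝ), 0 ≤ x t) ∧
      StrictAntiOn x (Ioi 0) ∧
      (∃ X : ℝ → ℝ, ContinuousOn X (Ici 0) ∧ (∀ t ∈ Ici (0:ℝ), 0 ≤ X t) ∧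
        ∀ t ∈ Ioi (0:ℝ), X t = t ^ (1 - β) * x t) ∧
      (∀ t ∈ Ioi (0:ℝ), x t = x₀ * t ^ (β - 1) +
        (1 / Real.Gamma β) *
          ∫ s in Ioo (0:ℝ) t, (t - s) ^ (β - 1) * (l s * φ (x s) + k s)) ∧
      Tendsto x atTop (nhds 0) :=
  stmt_11_general β μ p x₀ M hβ0 hβ1 hμ0 hμ1 hp hx₀ hM φ l k hφ0 hφmono hφM hl0 hlmono hlLp hk0
    hkmono hkLp ha hb
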